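/- Let p*_f = exp(β x_f)/∑_{f'} exp(β x_{f'}) and p̄_f = α_f·exp(β x_f)/∑_{f'} α_{f'}·exp(β x_{f'}), where each α_f satisfies exp(−β·Δ_max) ≤ α_f ≤ exp(β·Δ_max). Then the total variation distance d_TV(p*, p̄) = (1/2)·∑_{f∈F} |p*_f − p̄_f| satisfies 0 ≤ d_TV(p*, p̄) ≤ 1 − exp(−2β·Δ_max). -/

import Mathlib

open Finset Real

/-! The Gibbs weights `exp (β x_f)` are reweighted by factors `α_f` within a ratio
`exp (2 β Δmax)` of each other, so every reweighted probability is at least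
`c = exp (-2 β Δmax)` times the original one. Whenever `c • p ≤ q` pointwise for two
probability vectors, the mass `p` has in excess of `q` is at most `(1 - c)` of its total,
and that excess mass is the total variation distance. -/

section

variable {ι : Type*}

theorem sum_abs_sub_eq_two_mul_sum_posPart (s : Finset ι) {p q : ι → ℝ}
    (h : ∑ i ∈ s, p i = ∑ i ∈ s, q i) :
    ∑ i ∈ s, |p i - q i| = 2 * ∑ i ∈ s, (p i - q i)⁺ := by
  have habs (a : ℝ) : |a| = 2 * a⁺ - a :=
    eq_sub_of_add_eq (by rw [abs_add_eq_two_nsmul_posPart, two_nsmul, two_mul])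
  rw [sum_congr rfl fun i _ => habs (p i - q i), sum_sub_distrib, ← mul_sum, sum_sub_distrib, h,
    sub_self, sub_zero]

theorem half_sum_abs_sub_le_one_sub_of_mul_le (s : Finset ι) {p q : ι → ℝ} {c : ℝ}
    (hp : ∀ i ∈ s, 0 ≤ p i) (hp_sum : ∑ i ∈ s, p i = 1) (hq_sum : ∑ i ∈ s, q i = 1)
    (hpq : ∀ i ∈ s, c * p i ≤ q i) :
    1 / 2 * ∑ i ∈ s, |p i - q i| ≤ 1 - c := by
  have hc : c ≤ 1 :=
    calc c = ∑ i ∈ s, c * p i := by rw [← mul_sum, hp_sum, mul_one]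
      _ ≤ ∑ i ∈ s, q i := sum_le_sum hpq
      _ = 1 := hq_sum
  rw [sum_abs_sub_eq_two_mul_sum_posPart s (hp_sum.trans hq_sum.symm)]
  calc 1 / 2 * (2 * ∑ i ∈ s, (p i - q i)⁺) = ∑ i ∈ s, (p i - q i)⁺ := by ring
    _ ≤ ∑ i ∈ s, (1 - c) * p i := by
      refine sum_le_sum fun i hi => (posPart_def _).trans_le (sup_le ?_ ?_)
      · linarith [hpq i hi]
      · exact mul_nonneg (sub_nonneg.mpr hc) (hp i hi)
    _ = 1 - c := by rw [← mul_sum, hp_sum, mul_one]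

section normalizeWeights

variable [Fintype ι]

noncomputable def normalizeWeights (w : ι → ℝ) (i : ι) : ℝ := w i / ∑ j, w j

variable {w : ι → ℝ}

theorem normalizeWeights_nonneg (hw : ∀ i, 0 ≤ w i) (i : ι) : 0 ≤ normalizeWeights w i :=
  div_nonneg (hw i) (sum_nonneg fun j _ => hw j)

theorem sum_normalizeWeights [Nonempty ι] (hw : ∀ i, 0 < w i) :
    ∑ i, normalizeWeights w i = 1 := by
  simp only [normalizeWeights]
  rw [← sum_div, div_self (sum_pos (fun i _ => hw i) univ_nonempty).ne']

theorem div_mul_normalizeWeights_le_normalizeWeights_mul {α : ι → ℝ} {a b : ℝ} (ha : 0 < a)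
    (hw : ∀ i, 0 < w i) (hα : ∀ i, a ≤ α i ∧ α i ≤ b) (i : ι) :
    a / b * normalizeWeights w i ≤ normalizeWeights (fun j => α j * w j) i := by
  have hαw (j : ι) : 0 < α j * w j := mul_pos (ha.trans_le (hα j).1) (hw j)
  have hS : 0 < ∑ j, w j := sum_pos (fun j _ => hw j) ⟨i, mem_univ i⟩
  have hT : 0 < ∑ j, α j * w j := sum_pos (fun j _ => hαw j) ⟨i, mem_univ i⟩
  have hTS : ∑ j, α j * w j ≤ b * ∑ j, w j := by
    rw [mul_sum]
    exact sum_le_sum fun j _ => mul_le_mul_of_nonneg_right (hα j).2 (hw j).le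
  calc a / b * normalizeWeights w i = a * w i / (b * ∑ j, w j) := by
        rw [normalizeWeights, div_mul_div_comm]
    _ ≤ a * w i / ∑ j, α j * w j :=
        div_le_div_of_nonneg_left (mul_pos ha (hw i)).le hT hTS
    _ ≤ α i * w i / ∑ j, α j * w j := by gcongr; exacts [(hw i).le, (hα i).1]

end normalizeWeights

end

theorem stmt_7_general {F : Type*} [Fintype F] [Nonempty F] (x : F → ℝ) (β : ℝ)
    (Δmax : ℝ)
    (α : F → ℝ)
    (hα : ∀ f, Real.exp (-(β * Δmax)) ≤ α f ∧ α f ≤ Real.exp (β * Δmax))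
    (pstar pbar : F → ℝ)
    (hps : ∀ f, pstar f = Real.exp (β * x f) / ∑ f', Real.exp (β * x f'))
    (hpb : ∀ f, pbar f = α f * Real.exp (β * x f) / ∑ f', α f' * Real.exp (β * x f')) :
    0 ≤ (1 / 2) * ∑ f, |pstar f - pbar f| ∧
    (1 / 2) * ∑ f, |pstar f - pbar f| ≤ 1 - Real.exp (-(2 * β * Δmax)) := by
  obtain rfl : pstar = normalizeWeights fun f => Real.exp (β * x f) := funext hps
  obtain rfl : pbar = normalizeWeights fun f => α f * Real.exp (β * x f) := funext hpb
  have hw (f : F) : 0 < Real.exp (β * x f) := Real.exp_pos _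
  have hc : Real.exp (-(2 * β * Δmax)) = Real.exp (-(β * Δmax)) / Real.exp (β * Δmax) := by
    rw [← Real.exp_sub]; ring_nf
  refine ⟨by positivity, hc ▸ half_sum_abs_sub_le_one_sub_of_mul_le univ
    (fun f _ => normalizeWeights_nonneg (fun f => (hw f).le) f) (sum_normalizeWeights hw)
    (sum_normalizeWeights fun f => mul_pos ((Real.exp_pos _).trans_le (hα f).1) (hw f))
    fun f _ => div_mul_normalizeWeights_le_normalizeWeights_mul (Real.exp_pos _) hw hα f⟩

theorem stmt_7 {F : Type*} [Fintype F] [Nonempty F] (x : F → ℝ) (β : ℝ) (hβ : 0 < β)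
    (Δmax : ℝ) (hΔmax : 0 ≤ Δmax)
    (α : F → ℝ)
    (hα : ∀ f, Real.exp (-(β * Δmax)) ≤ α f ∧ α f ≤ Real.exp (β * Δmax))
    (pstar pbar : F → ℝ)
    (hps : ∀ f, pstar f = Real.exp (β * x f) / ∑ f', Real.exp (β * x f'))
    (hpb : ∀ f, pbar f = α f * Real.exp (β * x f) / ∑ f', α f' * Real.exp (β * x f')) :
    0 ≤ (1 / 2) * ∑ f, |pstar f - pbar f| ∧
    (1 / 2) * ∑ f, |pstar f - pbar f| ≤ 1 - Real.exp (-(2 * β * Δmax)) :=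
  stmt_7_general x β Δmax α hα pstar pbar hps hpb
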